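/- Let H : ℝ^{2n} → ℝ be a C² function and A a skew-symmetric real n×n matrix such that H(exp(sρ(A))w) = H(w) for all s ∈ ℝ and w ∈ ℝ^{2n}, where ρ(A) := diag(A,A). Let z ∈ ℝ^{2n} and let γ : ℝ → ℝ^{2n} satisfy γ(0) = z and γ′(t) = J∇H(γ(t)) for all t. If J∇H(z) = ρ(A)z, then γ(t) = exp(tρ(A))z for all t ∈ ℝ; in particular, if moreover exp(tA) ∈ G for all t for a subgroup G of O(n) acting by ρ(g)(x,ξ) = (gx,gξ), then the whole trajectory of z is contained in the group orbit Gz = {ρ(g)z : g ∈ G}. -/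

import Mathlib

open scoped RealInnerProductSpace Matrix

noncomputable section

/-- Phase space `ℝ^{2n} = ℝⁿ × ℝⁿ`. -/
abbrev Vn (n : ℕ) := EuclideanSpace ℝ (Fin n ⊕ Fin n)

/-- The standard symplectic matrix `J = [[0, I], [-I, 0]]`. -/
def JM (n : ℕ) : Matrix (Fin n ⊕ Fin n) (Fin n ⊕ Fin n) ℝ :=
  Matrix.fromBlocks 0 1 (-1) 0

/-- The lifted (block diagonal) action `ρ(A) = diag(A, A)` of an `n × n` matrix. -/
def rhoM {n : ℕ} (A : Matrix (Fin n) (Fin n) ℝ) :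
    Matrix (Fin n ⊕ Fin n) (Fin n ⊕ Fin n) ℝ :=
  Matrix.fromBlocks A 0 0 A

/-- Action of a `2n × 2n` matrix on phase space. -/
def act {n : ℕ} (M : Matrix (Fin n ⊕ Fin n) (Fin n ⊕ Fin n) ℝ) : Vn n →ₗ[ℝ] Vn n :=
  Matrix.toEuclideanLin M

/-! Since `X = ρ(A)` is skew, `exp (s X)` is orthogonal, so the invariance `H ∘ exp (s X) = H`
makes the gradient equivariant: `∇H (exp (s X) w) = exp (s X) (∇H w)`. As `J` commutes with `X`,
the curve `σ t = exp (t X) z` satisfies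
`σ' t = exp (t X) (X z) = exp (t X) (J ∇H z) = J ∇H (σ t)`,
so it solves the same Hamiltonian equation as `γ`, with the same initial value. The vector field
`J ∇H` is `C¹`, hence locally Lipschitz, so `γ = σ`. Finally `exp (t ρ(A)) = ρ(exp (t A))` puts
`γ t` in the `G`-orbit of `z`. -/

open scoped Gradient Topology
open NormedSpace

theorem ODE_solution_unique_univ_of_locallyLipschitz {E : Type*} [NormedAddCommGroup E]
    [NormedSpace ℝ E] {v : E → E} (hv : LocallyLipschitz v) {f g : ℝ → E}
    (hf : ∀ t, HasDerivAt f (v (f t)) t) (hg : ∀ t, HasDerivAt g (v (g t)) t) {t₀ : ℝ}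
    (heq : f t₀ = g t₀) : f = g := by
  have hfc : Continuous f := continuous_iff_continuousAt.2 fun t => (hf t).continuousAt
  have hgc : Continuous g := continuous_iff_continuousAt.2 fun t => (hg t).continuousAt
  have hopen : IsOpen {t | f t = g t} := by
    refine isOpen_iff_mem_nhds.2 fun t ht => ?_
    obtain ⟨K, s, hs, hlip⟩ := hv (f t)
    have hfs : ∀ᶠ t' in 𝓝 t, f t' ∈ s := hfc.continuousAt.preimage_mem_nhds hs
    have hgs : ∀ᶠ t' in 𝓝 t, g t' ∈ s := hgc.continuousAt.preimage_mem_nhds (ht ▸ hs)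
    exact ODE_solution_unique_of_eventually (v := fun _ => v) (s := fun _ => s)
      (.of_forall fun _ => hlip) (hfs.mono fun t h => ⟨hf t, h⟩)
      (hgs.mono fun t h => ⟨hg t, h⟩) ht
  have hclopen : IsClopen {t | f t = g t} := ⟨isClosed_eq hfc hgc, hopen⟩
  funext t
  exact Set.eq_univ_iff_forall.1 (hclopen.eq_univ ⟨t₀, heq⟩) t

theorem exp_smul_mem_unitary_of_mem_skewAdjoint {𝔸 : Type*} [NormedRing 𝔸] [NormedAlgebra ℝ 𝔸]
    [CompleteSpace 𝔸] [StarRing 𝔸] [ContinuousStar 𝔸] [StarModule ℝ 𝔸] {X : 𝔸}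
    (hX : X ∈ skewAdjoint 𝔸) (t : ℝ) : exp (t • X) ∈ unitary 𝔸 :=
  let +nondep : NormedAlgebra ℚ 𝔸 := .restrictScalars ℚ ℝ 𝔸
  exp_mem_unitary_of_mem_skewAdjoint <| skewAdjoint.mem_iff.2 <| by
    rw [star_smul, star_trivial, skewAdjoint.mem_iff.1 hX, smul_neg]

section Hilbert

variable {E : Type*} [NormedAddCommGroup E] [InnerProductSpace ℝ E] [CompleteSpace E]

theorem gradient_comp_linearIsometryEquiv (f : E → ℝ) (L : E ≃ₗᵢ[ℝ] E) (x : E) :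
    ∇ (f ∘ L) x = L.symm (∇ f (L x)) := by
  refine ext_inner_right ℝ fun u => ?_
  have hcomp : fderiv ℝ (f ∘ L) x = (fderiv ℝ f (L x)).comp (L : E →L[ℝ] E) :=
    L.toContinuousLinearEquiv.comp_right_fderiv
  rw [inner_gradient_left, hcomp, LinearIsometryEquiv.inner_map_eq_flip,
    LinearIsometryEquiv.symm_symm, inner_gradient_left]
  rfl

theorem gradient_apply_linearIsometryEquiv_of_comp_eq {f : E → ℝ} {L : E ≃ₗᵢ[ℝ] E}
    (hf : f ∘ L = f) (x : E) : ∇ f (L x) = L (∇ f x) := by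
  rw [← L.apply_symm_apply (∇ f (L x)), ← gradient_comp_linearIsometryEquiv, hf]

theorem ContDiff.contDiff_gradient {f : E → ℝ} {m n : WithTop ℕ∞} (hf : ContDiff ℝ n f)
    (hmn : m + 1 ≤ n) : ContDiff ℝ m (∇ f) :=
  (InnerProductSpace.toDual ℝ E).symm.toContinuousLinearEquiv.contDiff.comp
    (hf.fderiv_right hmn)

theorem hasDerivAt_exp_smul_apply (X : E →L[ℝ] E) (z : E) (t : ℝ) :
    HasDerivAt (fun s : ℝ => exp (s • X) z) (exp (t • X) (X z)) t := by
  simpa using (hasDerivAt_exp_smul_const X t).clm_apply (hasDerivAt_const t z)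

theorem hamiltonian_trajectory_eq_exp_smul_apply {H : E → ℝ} (hH : ContDiff ℝ 2 H)
    {J X : E →L[ℝ] E} (hX : X ∈ skewAdjoint (E →L[ℝ] E)) (hJX : Commute J X)
    (hHinv : ∀ (s : ℝ) (w : E), H (exp (s • X) w) = H w) {z : E} {γ : ℝ → E} (hγ0 : γ 0 = z)
    (hγ : ∀ t, HasDerivAt γ (J (∇ H (γ t))) t) (hz : J (∇ H z) = X z) (t : ℝ) :
    γ t = exp (t • X) z := by
  have hgrad (s : ℝ) (w : E) : ∇ H (exp (s • X) w) = exp (s • X) (∇ H w) :=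
    gradient_apply_linearIsometryEquiv_of_comp_eq
      (L := Unitary.linearIsometryEquiv ⟨_, exp_smul_mem_unitary_of_mem_skewAdjoint hX s⟩)
      (funext (hHinv s)) w
  have hflow (s : ℝ) : HasDerivAt (fun r : ℝ => exp (r • X) z) (J (∇ H (exp (s • X) z))) s := by
    rw [hgrad, ← mul_apply_eq_comp, ((hJX.smul_right s).exp_right).eq, mul_apply_eq_comp, hz]
    exact hasDerivAt_exp_smul_apply X z s
  have hv : LocallyLipschitz fun x => J (∇ H x) :=
    (J.contDiff.comp (hH.contDiff_gradient (by norm_num))).locallyLipschitz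
  have hγ0' : γ 0 = exp ((0 : ℝ) • X) z := by simp [hγ0]
  exact congrFun (ODE_solution_unique_univ_of_locallyLipschitz hv hγ hflow hγ0') t

end Hilbert

section Matrix

open Matrix

-- Any algebra norm would do: it only serves to make `map_exp` applicable.
attribute [local instance] Matrix.linftyOpNormedRing Matrix.linftyOpNormedAlgebra

def rhoRingHom (n : ℕ) :
    Matrix (Fin n) (Fin n) ℝ →+* Matrix (Fin n ⊕ Fin n) (Fin n ⊕ Fin n) ℝ where
  toFun := rhoM
  map_one' := by simp [rhoM, ← fromBlocks_one]
  map_mul' A B := by simp [rhoM, fromBlocks_multiply]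
  map_zero' := by simp [rhoM]
  map_add' A B := by simp [rhoM, fromBlocks_add]

variable {n : ℕ}

theorem rhoM_smul (t : ℝ) (A : Matrix (Fin n) (Fin n) ℝ) : rhoM (t • A) = t • rhoM A := by
  simp [rhoM, fromBlocks_smul]

theorem rhoM_neg (A : Matrix (Fin n) (Fin n) ℝ) : rhoM (-A) = -rhoM A :=
  map_neg (rhoRingHom n) A

theorem rhoM_transpose (A : Matrix (Fin n) (Fin n) ℝ) : (rhoM A)ᵀ = rhoM Aᵀ := by
  simp [rhoM, fromBlocks_transpose]

theorem exp_rhoM (A : Matrix (Fin n) (Fin n) ℝ) : exp (rhoM A) = rhoM (exp A) :=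
  (map_exp (rhoRingHom n) (continuous_id.matrix_fromBlocks continuous_const continuous_const
    continuous_id) A).symm

theorem commute_JM_rhoM (A : Matrix (Fin n) (Fin n) ℝ) : Commute (JM n) (rhoM A) := by
  simp [Commute, SemiconjBy, JM, rhoM, fromBlocks_multiply]

theorem coe_act_exp (M : Matrix (Fin n ⊕ Fin n) (Fin n ⊕ Fin n) ℝ) :
    ⇑(act (exp M)) = ⇑(exp (toEuclideanCLM (𝕜 := ℝ) M)) := by
  let T := toEuclideanCLM (n := Fin n ⊕ Fin n) (𝕜 := ℝ)
  rw [← map_exp T (LinearMap.continuous_of_finiteDimensional T.toAlgEquiv.toLinearMap)]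
  rfl

theorem toEuclideanCLM_rhoM_mem_skewAdjoint {A : Matrix (Fin n) (Fin n) ℝ} (hA : Aᵀ = -A) :
    toEuclideanCLM (𝕜 := ℝ) (rhoM A) ∈ skewAdjoint (Vn n →L[ℝ] Vn n) := by
  rw [skewAdjoint.mem_iff, ← map_star, star_eq_conjTranspose,
    conjTranspose_eq_transpose_of_trivial, rhoM_transpose, hA, rhoM_neg, map_neg]

end Matrix

theorem trajectory_of_relatively_stationary_point {n : ℕ}
    (H : Vn n → ℝ) (hH : ContDiff ℝ 2 H)
    (A : Matrix (Fin n) (Fin n) ℝ) (hA : Aᵀ = -A)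
    (hHinv : ∀ (s : ℝ) (w : Vn n), H (act (NormedSpace.exp (s • rhoM A)) w) = H w)
    (z : Vn n) (γ : ℝ → Vn n) (hγ0 : γ 0 = z)
    (hγode : ∀ t : ℝ, HasDerivAt γ (act (JM n) (gradient H (γ t))) t)
    (hz : act (JM n) (gradient H z) = act (rhoM A) z) :
    (∀ t : ℝ, γ t = act (NormedSpace.exp (t • rhoM A)) z) ∧
    (∀ G : Set (Matrix (Fin n) (Fin n) ℝ),
      (∀ g ∈ G, g ∈ Matrix.orthogonalGroup (Fin n) ℝ) →
      (1 : Matrix (Fin n) (Fin n) ℝ) ∈ G →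
      (∀ g ∈ G, ∀ g' ∈ G, g * g' ∈ G) →
      (∀ g ∈ G, g⁻¹ ∈ G) →
      (∀ t : ℝ, NormedSpace.exp (t • A) ∈ G) →
      ∀ t : ℝ, ∃ g ∈ G, γ t = act (rhoM g) z) := by
  set X := Matrix.toEuclideanCLM (𝕜 := ℝ) (rhoM A)
  have hflow (s : ℝ) : ⇑(act (exp (s • rhoM A))) = ⇑(exp (s • X)) := by
    rw [coe_act_exp, map_smul]
  have htraj (t : ℝ) : γ t = act (exp (t • rhoM A)) z := by
    rw [hflow]
    refine hamiltonian_trajectory_eq_exp_smul_apply hH (toEuclideanCLM_rhoM_mem_skewAdjoint hA)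
      ((commute_JM_rhoM A).map Matrix.toEuclideanCLM) (fun s w => ?_) hγ0 hγode hz t
    rw [← hflow, hHinv]
  refine ⟨htraj, fun G _ _ _ _ hGexp t => ⟨exp (t • A), hGexp t, ?_⟩⟩
  rw [htraj, ← rhoM_smul, exp_rhoM]

end
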